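/- arXiv:1810.10464 — 5 statements merged into one kernel-verified Lean document; each statement's English description precedes it below -/
import Mathlib

section
/- Let f = (f_n)_{n=0}^{31} be an arbitrary family of functions where f_n maps bit-strings of length n to a single bit, and let PP_f be the canonical prefix-preserving function. For any two bit-strings a, b ∈ {0,1}^32, the length of the longest common prefix of PP_f(a) and PP_f(b) equals the length of the longest common prefix of a and b. In particular, if a and b share a k-bit prefix (agree on the first k bits and, if k < 32, differ at bit k+1), then PP_f(a) and PP_f(b) share a k-bit prefix. -/
/-- The canonical prefix-preserving anonymization function: bit `i` of the
output is bit `i` of the input XOR-ed with `f i` applied to the first `i`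
bits of the input. -/
def PP (f : (n : Fin 32) → (Fin (n : ℕ) → Bool) → Bool)
    (a : Fin 32 → Bool) : Fin 32 → Bool :=
  fun i => xor (a i) (f i (fun j => a ⟨j.val, j.isLt.trans i.isLt⟩))

/-- The longest-common-prefix length of two 32-bit strings: the largest
`k ≤ 32` such that `a` and `b` agree on their first `k` bits. -/
def Q (a b : Fin 32 → Bool) : ℕ :=
  Nat.findGreatest (fun k => ∀ i : Fin 32, i.val < k → a i = b i) 32

/-- `a` and `b` share a `k`-bit prefix: they agree on the first `k` bits and,
when `k < 32`, they differ at bit `k+1` (index `k`, zero-based). -/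
def SharePrefix (a b : Fin 32 → Bool) (k : ℕ) : Prop :=
  (∀ i : Fin 32, i.val < k → a i = b i) ∧ ∀ h : k < 32, a ⟨k, h⟩ ≠ b ⟨k, h⟩

/-! Bit `i` of `PP f a` is `a i` masked by a bit that depends only on the bits of `a` below `i`.
Hence two strings agreeing below `i` receive the same mask at `i`, and XOR with a common mask
preserves both equality and inequality of bit `i`; induction on `i` then shows that `PP f a` and
`PP f b` agree on their first `k` bits exactly when `a` and `b` do. -/

theorem PP_apply_eq_iff_of_agree {f : (n : Fin 32) → (Fin (n : ℕ) → Bool) → Bool}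
    {a b : Fin 32 → Bool} {i : Fin 32} (h : ∀ j : Fin 32, j < i → a j = b j) :
    PP f a i = PP f b i ↔ a i = b i := by
  have mask_eq : (fun j : Fin i.val => a ⟨j.val, j.isLt.trans i.isLt⟩) =
      (fun j : Fin i.val => b ⟨j.val, j.isLt.trans i.isLt⟩) :=
    funext fun j => h _ j.isLt
  simp only [PP, mask_eq, Bool.xor_left_inj]

theorem PP_agree_below_iff (f : (n : Fin 32) → (Fin (n : ℕ) → Bool) → Bool)
    (a b : Fin 32 → Bool) (k : ℕ) :
    (∀ i : Fin 32, i.val < k → PP f a i = PP f b i) ↔ ∀ i : Fin 32, i.val < k → a i = b i := by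
  constructor
  · intro hPP i
    induction i using WellFoundedLT.induction with
    | ind i ih =>
      intro hi
      exact (PP_apply_eq_iff_of_agree fun j hj => ih j hj (lt_trans hj hi)).1 (hPP i hi)
  · intro hab i hi
    exact (PP_apply_eq_iff_of_agree fun j hj => hab j (lt_trans hj hi)).2 (hab i hi)

/-- The canonical prefix-preserving function preserves the longest common
prefix length, and in particular the shared-`k`-bit-prefix relation. -/
theorem PP_preserves_prefix (f : (n : Fin 32) → (Fin (n : ℕ) → Bool) → Bool)
    (a b : Fin 32 → Bool) :
    Q (PP f a) (PP f b) = Q a b ∧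
      ∀ k : ℕ, SharePrefix a b k → SharePrefix (PP f a) (PP f b) k := by
  refine ⟨by simp only [Q, PP_agree_below_iff], fun k ⟨hagree, hdiff⟩ => ?_⟩
  refine ⟨(PP_agree_below_iff f a b k).2 hagree, fun hk => ?_⟩
  rw [Ne, PP_apply_eq_iff_of_agree hagree]
  exact hdiff hk
end

section
/- Let f = (f_n)_{n=0}^{31} be an arbitrary family of functions where f_n maps bit-strings of length n to a single bit, with canonical prefix-preserving function PP_f and reverse function RPP_f. Then for every natural number n and every a ∈ {0,1}^32, RPP_f^n(PP_f^n(a)) = a and PP_f^n(RPP_f^n(a)) = a, where F^n denotes n-fold composition; i.e., applying RPP_f the same number of times undoes any number of iterations of PP_f and vice versa. -/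
/-- The reverse of the canonical prefix-preserving function: bit `i` of the
output `c` is bit `i` of the input XOR-ed with `f i` applied to the first `i`
bits of `c` itself. -/
def RPP (f : (n : Fin 32) → (Fin (n : ℕ) → Bool) → Bool)
    (b : Fin 32 → Bool) : Fin 32 → Bool
  | i => xor (b i) (f i (fun j => RPP f b ⟨j.val, j.isLt.trans i.isLt⟩))
termination_by i => i.val
decreasing_by exact j.isLt

/-! Both maps XOR bit `i` with the same mask `f i (prefix)`; they differ only in whether the
prefix is read from the input (`PP`) or from the output (`RPP`). Since XOR with a fixed bit is
an involution, `PP f ∘ RPP f = id` is immediate, while `RPP f ∘ PP f = id` follows by strong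
induction on the bit position, the prefixes agreeing by the induction hypothesis. -/

section

variable (f : (n : Fin 32) → (Fin (n : ℕ) → Bool) → Bool)

theorem RPP_apply (b : Fin 32 → Bool) (i : Fin 32) :
    RPP f b i = xor (b i) (f i fun j => RPP f b ⟨j, j.isLt.trans i.isLt⟩) := by
  rw [RPP]

theorem rightInverse_RPP_PP : Function.RightInverse (RPP f) (PP f) := fun b => by
  funext i
  rw [PP, RPP_apply]
  simp only [Bool.xor_assoc, Bool.xor_self, Bool.xor_false]

theorem leftInverse_RPP_PP : Function.LeftInverse (RPP f) (PP f) := fun a => by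
  funext i
  induction i using Fin.strong_induction_on with
  | h i ih =>
    have prefix_eq : (fun j : Fin (i : ℕ) => RPP f (PP f a) ⟨j, j.isLt.trans i.isLt⟩)
        = fun j : Fin (i : ℕ) => a ⟨j, j.isLt.trans i.isLt⟩ :=
      funext fun j => ih _ j.isLt
    rw [RPP_apply, prefix_eq]
    simp only [PP, Bool.xor_assoc, Bool.xor_self, Bool.xor_false]

end

/-- Iterating the reverse function the same number of times undoes any number
of iterations of the canonical prefix-preserving function, and vice versa. -/
theorem RPP_iterate_PP_iterate (f : (n : Fin 32) → (Fin (n : ℕ) → Bool) → Bool)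
    (n : ℕ) (a : Fin 32 → Bool) :
    (RPP f)^[n] ((PP f)^[n] a) = a ∧ (PP f)^[n] ((RPP f)^[n] a) = a :=
  ⟨(leftInverse_RPP_PP f).iterate n a, (rightInverse_RPP_PP f).iterate n a⟩
end

section
/- Let D, d, α be positive integers, s : Fin d → ℕ with ∑_j s_j = D, and let T ⊆ Fin D be a fixed set of α elements. Then the number of functions g : Fin D → Fin d whose fibers have the prescribed sizes s_j and that are injective on T, multiplied by ∏_j s_j!, equals α! · (D−α)! · ∑_{A ⊆ Fin d, |A| = α} ∏_{j ∈ A} s_j. -/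
/-!
Maps `g : β → ι` with fiber sizes `t`, together with an ordering of every fiber, are the same as
bijections from `β` onto `Σ j, Fin (t j)`; so their number times `∏ j, (t j)!` is `(#β)!`.

Split `g` into its restriction `u` to `T`, which must be injective, and its restriction `v` to
the complement. For fixed `u` the fibers of `v` must have sizes `s j - [j ∈ im u]`, and since
`s! = s · (s - 1)!` the count of such `v`, times `∏ j, (s j)!`, is `(D - α)! ∏_{j ∈ im u} s j`.
Finally every `α`-subset of groups is the image of exactly `α!` injective maps `u`.
-/

open Finset
open scoped Nat

def Equiv.fiberPreservingEquivsEquivPi {α β γ : Type*} (f : α → γ) (g : β → γ) :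
    {e : α ≃ β // ∀ a, g (e a) = f a} ≃ ∀ c, ({a // f a = c} ≃ {b // g b = c}) where
  toFun e c := e.1.subtypeEquiv fun a => by rw [e.2 a]
  invFun e := ⟨Equiv.ofFiberEquiv e, Equiv.ofFiberEquiv_map e⟩
  left_inv e := by ext a; rfl
  right_inv e := by funext c; ext ⟨a, rfl⟩; rfl

theorem Fintype.card_fiberPreserving_equivs {α β γ : Type*} [Fintype α] [DecidableEq α]
    [Fintype β] [DecidableEq β] [Fintype γ] [DecidableEq γ] {f : α → γ} {g : β → γ}
    (h : ∀ c, card {a // f a = c} = card {b // g b = c}) :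
    card {e : α ≃ β // ∀ a, g (e a) = f a} = ∏ c, (card {a // f a = c})! := by
  rw [card_congr (Equiv.fiberPreservingEquivsEquivPi f g), card_pi]
  exact Fintype.prod_congr _ _ fun c => card_equiv (equivOfCardEq (h c))

theorem card_filter_prod_eq_sum {A B : Type*} [Fintype A] [Fintype B] (P : A → Prop)
    (R : A → B → Prop) [DecidablePred P] [∀ a, DecidablePred (R a)] :
    #{p : A × B | P p.1 ∧ R p.1 p.2} = ∑ a with P a, #{b | R a b} := by
  simp only [card_filter, Fintype.sum_prod_type, sum_filter, ite_and, sum_ite_irrel,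
    sum_const_zero]

theorem card_filter_eq_card_filter_subtype_add_compl {β : Type*} [Fintype β] (p q : β → Prop)
    [DecidablePred p] [DecidablePred q] [Fintype {i // p i}] [Fintype {i // ¬p i}] :
    #{i | q i} = #{x : {i // p i} | q x} + #{x : {i // ¬p i} | q x} := by
  simp only [card_filter]
  convert (Fintype.sum_subtype_add_sum_subtype p _).symm

section

variable {ι : Type*} [DecidableEq ι]

theorem card_filter_apply_eq_of_injective {γ : Type*} [Fintype γ] {u : γ → ι}
    (hu : u.Injective) (j : ι) : #{x | u x = j} = if j ∈ image u univ then 1 else 0 := by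
  split_ifs with hj
  · obtain ⟨x, -, rfl⟩ := mem_image.1 hj
    exact card_eq_one.2 ⟨x, by ext y; simp [hu.eq_iff]⟩
  · exact card_eq_zero.2 <| filter_false_of_mem fun x _ hx =>
      hj (hx ▸ mem_image_of_mem u (mem_univ x))

noncomputable def injectiveImageEqEquiv (γ : Type*) [Fintype γ] (A : Finset ι) :
    {u : γ → ι // u.Injective ∧ image u univ = A} ≃ (γ ≃ A) where
  toFun := fun ⟨u, hu, hA⟩ => Equiv.ofBijective
    (fun x => ⟨u x, hA ▸ mem_image_of_mem u (mem_univ x)⟩)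
    ⟨fun x y h => hu (congrArg Subtype.val h), fun j => by
      obtain ⟨x, -, hx⟩ := mem_image.1 (hA ▸ j.2 : (j : ι) ∈ image u univ)
      exact ⟨x, Subtype.ext hx⟩⟩
  invFun e := ⟨fun x => e x, Subtype.val_injective.comp e.injective, by
    ext j
    simp only [mem_image, mem_univ, true_and]
    exact ⟨fun ⟨x, hx⟩ => hx ▸ (e x).2, fun hj => ⟨e.symm ⟨j, hj⟩, by simp⟩⟩⟩
  left_inv := fun ⟨_, _, _⟩ => rfl
  right_inv _ := Equiv.ext fun _ => rfl

variable [Fintype ι]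

theorem card_filter_card_fiber_eq_mul_prod_factorial {β : Type*} [Fintype β] [DecidableEq β]
    (t : ι → ℕ) (ht : ∑ j, t j = Fintype.card β) :
    #{g : β → ι | ∀ j, #{i | g i = j} = t j} * ∏ j, (t j)! = (Fintype.card β)! := by
  let P := Σ j, Fin (t j)
  have card_fst_fiber (j : ι) : Fintype.card {p : P // p.1 = j} = t j := by
    rw [Fintype.card_congr (Equiv.sigmaSubtype j), Fintype.card_fin]
  have hP : Fintype.card β = Fintype.card P := by simp [P, ht]
  have hmaps : ((univ : Finset (β ≃ P)) : Set (β ≃ P)).MapsTo (fun e i => (e i).1)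
      ({g | ∀ j, #{i | g i = j} = t j} : Finset (β → ι)) := by
    intro e _
    simp only [coe_filter, mem_univ, true_and, Set.mem_ofPred_eq]
    intro j
    rw [← Fintype.card_subtype, ← card_fst_fiber]
    exact Fintype.card_congr (e.subtypeEquiv fun i => Iff.rfl)
  rw [← Fintype.card_equiv (Fintype.equivOfCardEq hP), ← Finset.card_univ,
    card_eq_sum_card_fiberwise hmaps]
  refine (sum_const_nat fun g hg => ?_).symm
  have hg (j : ι) : Fintype.card {i // g i = j} = t j := by
    rw [Fintype.card_subtype]
    exact (mem_filter.1 hg).2 j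
  rw [← Fintype.card_subtype]
  simp only [funext_iff]
  rw [Fintype.card_fiberPreserving_equivs fun j => by rw [hg, card_fst_fiber]]
  simp only [hg]

/-- `descFactorial` vanishes exactly when some `c j > s j`, i.e. when no `v` exists. -/
theorem card_filter_add_card_fiber_eq_mul_prod_factorial {γ : Type*} [Fintype γ]
    [DecidableEq γ] (c s : ι → ℕ) (hs : ∑ j, s j = Fintype.card γ + ∑ j, c j) :
    #{v : γ → ι | ∀ j, c j + #{x | v x = j} = s j} * ∏ j, (s j)! =
      (Fintype.card γ)! * ∏ j, (s j).descFactorial (c j) := by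
  by_cases hcs : ∀ j, c j ≤ s j
  · have hfilter : #{v : γ → ι | ∀ j, c j + #{x | v x = j} = s j} =
        #{v : γ → ι | ∀ j, #{x | v x = j} = s j - c j} := by
      congr 1
      exact filter_congr fun v _ => forall_congr' fun j => by have := hcs j; omega
    have hsub : ∑ j, (s j - c j) = Fintype.card γ := by
      rw [sum_tsub_distrib _ fun j _ => hcs j, hs, Nat.add_sub_cancel]
    have hfact : ∏ j, (s j)! = (∏ j, (s j - c j)!) * ∏ j, (s j).descFactorial (c j) := by
      rw [← prod_mul_distrib]
      exact Fintype.prod_congr _ _ fun j => (Nat.factorial_mul_descFactorial (hcs j)).symm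
    rw [hfilter, hfact, ← mul_assoc, card_filter_card_fiber_eq_mul_prod_factorial _ hsub]
  · obtain ⟨j, hj⟩ := not_forall.1 hcs
    have hempty : #{v : γ → ι | ∀ j, c j + #{x | v x = j} = s j} = 0 :=
      card_eq_zero.2 <| filter_false_of_mem fun v _ hv => hj (hv j ▸ Nat.le_add_right _ _)
    rw [hempty, zero_mul,
      prod_eq_zero (mem_univ j) (Nat.descFactorial_eq_zero_iff_lt.2 (not_le.1 hj)), mul_zero]

theorem card_filter_card_fiber_eq_injOn_eq_sum {β : Type*} [Fintype β] [DecidableEq β]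
    (T : Finset β) (s : ι → ℕ) :
    #{g : β → ι | (∀ j, #{i | g i = j} = s j) ∧ ∀ x ∈ T, ∀ y ∈ T, g x = g y → x = y} =
      ∑ u : T → ι with u.Injective,
        #{v : {i // i ∉ T} → ι | ∀ j, #{x | u x = j} + #{x | v x = j} = s j} := by
  rw [← card_filter_prod_eq_sum]
  refine card_equiv (Equiv.piEquivPiSubtypeProd (· ∈ T) fun _ => ι) fun g => ?_
  simp only [mem_filter, mem_univ, true_and, Equiv.piEquivPiSubtypeProd_apply,
    card_filter_eq_card_filter_subtype_add_compl (· ∈ T) (fun i => g i = _)]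
  exact and_comm.trans (and_congr_left' Set.injOn_iff_injective)

theorem prod_descFactorial_card_filter_apply_eq_of_injective {γ : Type*} [Fintype γ]
    {u : γ → ι} (hu : u.Injective) (s : ι → ℕ) :
    ∏ j, (s j).descFactorial #{x | u x = j} = ∏ j ∈ image u univ, s j := by
  simp only [card_filter_apply_eq_of_injective hu, apply_ite, Nat.descFactorial_one,
    Nat.descFactorial_zero, Fintype.prod_ite_mem]

theorem card_filter_injective_image_eq {γ : Type*} [Fintype γ] [DecidableEq γ]
    {A : Finset ι} (hA : #A = Fintype.card γ) :
    #{u : γ → ι | u.Injective ∧ image u univ = A} = (Fintype.card γ)! := by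
  rw [← Fintype.card_subtype, Fintype.card_congr (injectiveImageEqEquiv γ A)]
  exact Fintype.card_equiv (Fintype.equivOfCardEq (by rw [Fintype.card_coe, hA]))

theorem sum_injective_prod_image_eq {γ : Type*} [Fintype γ] [DecidableEq γ] (s : ι → ℕ) :
    ∑ u : γ → ι with u.Injective, ∏ j ∈ image u univ, s j =
      (Fintype.card γ)! * ∑ A ∈ powersetCard (Fintype.card γ) univ, ∏ j ∈ A, s j := by
  have hmaps : ((univ.filter fun u : γ → ι => u.Injective) : Set (γ → ι)).MapsTo
      (fun u => image u univ) (powersetCard (Fintype.card γ) (univ : Finset ι) : Set _) :=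
    fun u hu => mem_powersetCard_univ.2 <| by
      rw [card_image_of_injective _ (mem_filter.1 hu).2, Finset.card_univ]
  rw [← sum_fiberwise_of_maps_to hmaps, mul_sum]
  refine sum_congr rfl fun A hA => ?_
  rw [sum_congr rfl fun u hu => by rw [(mem_filter.1 hu).2], sum_const_nat fun _ _ => rfl,
    filter_filter, card_filter_injective_image_eq (mem_powersetCard_univ.1 hA)]

end

theorem count_real_view_candidates_general (D d α : ℕ) (s : Fin d → ℕ) (hs : ∑ j, s j = D)
    (T : Finset (Fin D)) (hT : T.card = α) :
    (Finset.univ.filter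
        (fun g : Fin D → Fin d =>
          (∀ j, (Finset.univ.filter (fun i => g i = j)).card = s j) ∧
            ∀ x ∈ T, ∀ y ∈ T, g x = g y → x = y)).card *
        ∏ j, (s j).factorial =
      α.factorial * (D - α).factorial *
        ∑ A ∈ Finset.powersetCard α (Finset.univ : Finset (Fin d)),
          ∏ j ∈ A, s j := by
  have hcompl : Fintype.card {i // i ∉ T} = D - α := by
    rw [Fintype.card_subtype_compl, Fintype.card_fin, Fintype.card_coe, hT]
  have hsum (u : T → Fin d) :
      ∑ j, s j = Fintype.card {i // i ∉ T} + ∑ j, #{x | u x = j} := by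
    have hαD : α ≤ D := hT ▸ (card_le_univ T).trans_eq (Fintype.card_fin D)
    rw [← card_eq_sum_card_fiberwise fun x _ => mem_univ (u x), Finset.card_univ,
      Fintype.card_coe, hcompl, hs, hT, Nat.sub_add_cancel hαD]
  calc _ = (∑ u : T → Fin d with u.Injective, _) * ∏ j, (s j)! := by
        congr 1
        -- `convert` absorbs the `Fin`-specific decidability instances of the statement
        convert card_filter_card_fiber_eq_injOn_eq_sum T s
    _ = ∑ u : T → Fin d with u.Injective, (D - α)! * ∏ j ∈ image u univ, s j := by
        rw [sum_mul]
        refine sum_congr rfl fun u hu => ?_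
        rw [card_filter_add_card_fiber_eq_mul_prod_factorial _ _ (hsum u), hcompl,
          prod_descFactorial_card_filter_apply_eq_of_injective (mem_filter.1 hu).2]
    _ = _ := by
        rw [← mul_sum, sum_injective_prod_image_eq, Fintype.card_coe, hT]
        ring

/-- The number of assignments `g : Fin D → Fin d` with prescribed fiber sizes
`s j` that send the `α` adversary-known addresses `T` into pairwise distinct
groups, multiplied by `∏ j, (s j)!`, equals
`α! · (D − α)! · ∑_{A ⊆ Fin d, |A| = α} ∏_{j ∈ A} s j`. -/
theorem count_real_view_candidates (D d α : ℕ) (hD : 0 < D) (hd : 0 < d)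
    (hα : 0 < α) (s : Fin d → ℕ) (hs : ∑ j, s j = D)
    (T : Finset (Fin D)) (hT : T.card = α) :
    (Finset.univ.filter
        (fun g : Fin D → Fin d =>
          (∀ j, (Finset.univ.filter (fun i => g i = j)).card = s j) ∧
            ∀ x ∈ T, ∀ y ∈ T, g x = g y → x = y)).card *
        ∏ j, (s j).factorial =
      α.factorial * (D - α).factorial *
        ∑ A ∈ Finset.powersetCard α (Finset.univ : Finset (Fin d)),
          ∏ j ∈ A, s j :=
  count_real_view_candidates_general D d α s hs T hT
end

section
/- Let D, d, α be positive integers with α ≤ D, s : Fin d → ℕ with ∑_j s_j = D, and let T ⊆ Fin D be a fixed set of α elements. Let N_inj be the number of functions g : Fin D → Fin d with fiber sizes s_j that are injective on T, and N_all the number of functions g : Fin D → Fin d with fiber sizes s_j. Then N_inj · D! = α! · (D−α)! · (∑_{A ⊆ Fin d, |A| = α} ∏_{j ∈ A} s_j) · N_all; equivalently, the probability that a uniformly random such assignment sends the α elements of T to pairwise distinct groups equals α! · (∑_{|A|=α} ∏_{j∈A} s_j) / (D(D−1)⋯(D−α+1)). -/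
open Finset Function
open scoped Nat

/-!
Double count the pairs `(g, y)` of an assignment `g` with fibre sizes `s` and a map
`y : T → Fin D` such that `g ∘ y` is injective. For fixed `g`, choosing the groups
`g (y t)` (an injective map `T → Fin d`, i.e. an `α`-set `A` of groups in some order) and
then each `y t` inside its group gives `α! · ∑_{|A| = α} ∏_{j ∈ A} s j` pairs. For fixed
injective `y`, a permutation of `Fin D` carrying `y` to the inclusion of `T` shows that
there are exactly `N_inj` admissible `g`, and there are `D (D-1) ⋯ (D-α+1)` injective `y`.
-/

section InjectiveSums

variable {σ κ ι : Type*} [Fintype σ] [DecidableEq σ] [Fintype κ] [Fintype ι] [DecidableEq ι]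

theorem card_filter_injective_image_eq_factorial {A : Finset ι} (hA : #A = Fintype.card σ) :
    #{h : σ → ι | Injective h ∧ univ.image h = A} = (Fintype.card σ)! := by
  calc #{h : σ → ι | Injective h ∧ univ.image h = A}
      = #(univ : Finset (σ ↪ A)) := by
        refine (card_bij (fun (f : σ ↪ A) _ => (Subtype.val ∘ f : σ → ι)) (fun f _ => ?_)
          (fun f₁ _ f₂ _ hf => ?_) fun h hh => ?_).symm
        · have hinj : Injective (Subtype.val ∘ f) := Subtype.val_injective.comp f.injective
          refine mem_filter.2 ⟨mem_univ _, hinj, eq_of_subset_of_card_le ?_ ?_⟩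
          · simp [subset_iff]
          · rw [card_image_of_injective _ hinj, hA, card_univ]
        · exact DFunLike.ext _ _ fun k => Subtype.ext (congrFun hf k)
        · obtain ⟨hinj, himage⟩ := (mem_filter.1 hh).2
          refine ⟨⟨fun k => ⟨h k, himage ▸ mem_image_of_mem h (mem_univ k)⟩,
            fun k₁ k₂ hk => hinj (congrArg Subtype.val hk)⟩, mem_univ _, rfl⟩
    _ = (Fintype.card σ)! := by
        rw [card_univ, Fintype.card_embedding_eq, Fintype.card_coe, hA, Nat.descFactorial_self]

theorem sum_filter_injective_prod_eq_factorial_smul {R : Type*} [CommSemiring R] (w : ι → R) :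
    ∑ h : σ → ι with Injective h, ∏ i, w (h i) =
      (Fintype.card σ)! • ∑ A ∈ powersetCard (Fintype.card σ) univ, ∏ j ∈ A, w j := by
  rw [← sum_fiberwise_of_maps_to (g := fun h : σ → ι => univ.image h)
    (t := powersetCard (Fintype.card σ) univ) fun h hh => ?_, smul_sum]
  · refine sum_congr rfl fun A hA => ?_
    rw [mem_powersetCard] at hA
    calc ∑ h ∈ {h : σ → ι | Injective h} with univ.image h = A, ∏ i, w (h i)
        = ∑ h ∈ {h : σ → ι | Injective h} with univ.image h = A, ∏ j ∈ A, w j := by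
          refine sum_congr rfl fun h hh => ?_
          simp only [mem_filter, mem_univ, true_and] at hh
          rw [← hh.2, prod_image fun x _ y _ hxy => hh.1 hxy]
      _ = _ := by
          rw [sum_const, filter_filter, card_filter_injective_image_eq_factorial hA.2]
  · simp only [mem_filter, mem_univ, true_and] at hh
    simp [mem_powersetCard, card_image_of_injective _ hh]

theorem card_filter_injective_comp_eq_sum_prod (g : κ → ι) :
    #{y : σ → κ | Injective (g ∘ y)} =
      ∑ h : σ → ι with Injective h, ∏ i, #{x | g x = h i} := by
  rw [card_eq_sum_card_fiberwise (f := (g ∘ ·)) (t := {h : σ → ι | Injective h})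
    fun y hy => by simpa using hy]
  refine sum_congr rfl fun h hh => ?_
  rw [← Fintype.card_piFinset]
  congr 1
  ext y
  simp only [mem_filter, mem_univ, true_and, Fintype.mem_piFinset] at hh ⊢
  constructor
  · rintro ⟨-, rfl⟩ i
    rfl
  · intro hy
    obtain rfl : g ∘ y = h := funext hy
    exact ⟨hh, rfl⟩

end InjectiveSums

section DoubleCounting

variable {σ κ ι : Type*} [Fintype σ] [DecidableEq ι]

theorem card_filter_injective_comp_eq_of_perm_invariant {S : Finset (κ → ι)}
    (hS : ∀ g ∈ S, ∀ π : Equiv.Perm κ, g ∘ π ∈ S) {y₁ y₂ : σ → κ}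
    (h₁ : Injective y₁) (h₂ : Injective y₂) :
    #{g ∈ S | Injective (g ∘ y₁)} = #{g ∈ S | Injective (g ∘ y₂)} := by
  obtain ⟨π, hπ⟩ := Equiv.Perm.exists_extending_pair y₁ y₂ h₁ h₂
  obtain rfl : y₂ = π ∘ y₁ := (funext hπ).symm
  refine card_nbij' (· ∘ π.symm) (· ∘ π) (fun g hg => ?_) (fun g hg => ?_) (fun g _ => ?_)
    (fun g _ => ?_)
  · simp only [coe_filter, Set.mem_ofPred_eq] at hg ⊢
    exact ⟨hS g hg.1 _, by convert hg.2 using 1; ext; simp⟩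
  · simp only [coe_filter, Set.mem_ofPred_eq] at hg ⊢
    exact ⟨hS g hg.1 _, by simpa [comp_assoc] using hg.2⟩
  · ext; simp
  · ext; simp

variable [DecidableEq σ] [Fintype κ] [DecidableEq κ]

theorem card_filter_injective_eq_descFactorial :
    #{y : σ → κ | Injective y} = (Fintype.card κ).descFactorial (Fintype.card σ) := by
  rw [← Fintype.card_subtype, Fintype.card_congr (Equiv.subtypeInjectiveEquivEmbedding σ κ),
    Fintype.card_embedding_eq]

theorem sum_card_filter_injective_comp_eq {S : Finset (κ → ι)}
    (hS : ∀ g ∈ S, ∀ π : Equiv.Perm κ, g ∘ π ∈ S) {y₀ : σ → κ}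
    (h₀ : Injective y₀) :
    ∑ g ∈ S, #{y : σ → κ | Injective (g ∘ y)} =
      (Fintype.card κ).descFactorial (Fintype.card σ) * #{g ∈ S | Injective (g ∘ y₀)} := by
  calc ∑ g ∈ S, #{y : σ → κ | Injective (g ∘ y)}
      = ∑ y : σ → κ, #{g ∈ S | Injective (g ∘ y)} :=
        sum_card_bipartiteAbove_eq_sum_card_bipartiteBelow _
    _ = ∑ y ∈ {y : σ → κ | Injective y}, #{g ∈ S | Injective (g ∘ y₀)} := by
        rw [sum_filter]
        refine sum_congr rfl fun y _ => ?_
        split_ifs with hy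
        · exact card_filter_injective_comp_eq_of_perm_invariant hS hy h₀
        · exact card_eq_zero.2 (filter_eq_empty_iff.2 fun g _ hg => hy hg.of_comp)
    _ = _ := by rw [sum_const, card_filter_injective_eq_descFactorial, smul_eq_mul]

end DoubleCounting

def withFiberCards (κ : Type*) {ι : Type*} [Fintype κ] [DecidableEq κ] [Fintype ι]
    [DecidableEq ι] (s : ι → ℕ) : Finset (κ → ι) :=
  univ.filter fun g => ∀ j, #{i | g i = j} = s j

section FiberCards

variable {κ ι : Type*} [Fintype κ] [DecidableEq κ] [Fintype ι] [DecidableEq ι]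
  {s : ι → ℕ}

theorem mem_withFiberCards {g : κ → ι} :
    g ∈ withFiberCards κ s ↔ ∀ j, #{i | g i = j} = s j := by
  simp [withFiberCards]

theorem comp_perm_mem_withFiberCards {g : κ → ι} (hg : g ∈ withFiberCards κ s)
    (π : Equiv.Perm κ) : g ∘ π ∈ withFiberCards κ s := by
  rw [mem_withFiberCards] at hg ⊢
  intro j
  rw [← hg j]
  exact card_equiv π (by simp)

theorem withFiberCards_nonempty (hs : ∑ j, s j = Fintype.card κ) :
    (withFiberCards κ s).Nonempty := by
  let e : (Σ j, Fin (s j)) ≃ κ := Fintype.equivOfCardEq (by simpa using hs)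
  refine ⟨fun x => (e.symm x).1, mem_withFiberCards.2 fun j => ?_⟩
  calc #{x | (e.symm x).1 = j}
      = #{p : Σ j, Fin (s j) | p.1 = j} := card_equiv e.symm (by simp)
    _ = s j := by
        rw [card_filter, Fintype.sum_sigma]
        simp [apply_ite]

variable {σ : Type*} [Fintype σ] [DecidableEq σ]

theorem card_filter_injective_comp_of_mem_withFiberCards {g : κ → ι}
    (hg : g ∈ withFiberCards κ s) :
    #{y : σ → κ | Injective (g ∘ y)} =
      (Fintype.card σ)! * ∑ A ∈ powersetCard (Fintype.card σ) univ, ∏ j ∈ A, s j := by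
  rw [card_filter_injective_comp_eq_sum_prod, ← smul_eq_mul,
    ← sum_filter_injective_prod_eq_factorial_smul]
  exact sum_congr rfl fun h _ => prod_congr rfl fun i _ => mem_withFiberCards.1 hg (h i)

theorem card_withFiberCards_mul_eq {y₀ : σ → κ} (h₀ : Injective y₀) :
    #(withFiberCards κ s) *
        ((Fintype.card σ)! * ∑ A ∈ powersetCard (Fintype.card σ) univ, ∏ j ∈ A, s j) =
      (Fintype.card κ).descFactorial (Fintype.card σ) *
        #{g ∈ withFiberCards κ s | Injective (g ∘ y₀)} := by
  rw [← sum_card_filter_injective_comp_eq (fun g hg π => comp_perm_mem_withFiberCards hg π)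
    h₀, ← smul_eq_mul, ← sum_const]
  exact (sum_congr rfl fun g hg => card_filter_injective_comp_of_mem_withFiberCards hg).symm

end FiberCards

theorem Nat.cast_descFactorial_eq_prod_range_sub {R : Type*} [CommRing R] {n k : ℕ}
    (hk : k ≤ n) : (n.descFactorial k : R) = ∏ i ∈ range k, ((n : R) - i) := by
  rw [Nat.descFactorial_eq_prod_range, Nat.cast_prod]
  exact prod_congr rfl fun i hi => Nat.cast_sub (by simp at hi; omega)

theorem real_view_candidate_probability_general (D d α : ℕ) (hαD : α ≤ D) (s : Fin d → ℕ)
    (hs : ∑ j, s j = D)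
    (T : Finset (Fin D)) (hT : T.card = α) (Ninj Nall : ℕ)
    (hNinj : Ninj =
      (Finset.univ.filter
        (fun g : Fin D → Fin d =>
          (∀ j, (Finset.univ.filter (fun i => g i = j)).card = s j) ∧
            ∀ x ∈ T, ∀ y ∈ T, g x = g y → x = y)).card)
    (hNall : Nall =
      (Finset.univ.filter
        (fun g : Fin D → Fin d =>
          ∀ j, (Finset.univ.filter (fun i => g i = j)).card = s j)).card) :
    Ninj * D.factorial =
        α.factorial * (D - α).factorial *
          (∑ A ∈ Finset.powersetCard α (Finset.univ : Finset (Fin d)),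
            ∏ j ∈ A, s j) * Nall ∧
      (Ninj : ℚ) / Nall =
        (α.factorial *
            ∑ A ∈ Finset.powersetCard α (Finset.univ : Finset (Fin d)),
              ∏ j ∈ A, (s j : ℚ)) /
          ∏ i ∈ Finset.range α, ((D : ℚ) - i) := by
  set e := ∑ A ∈ powersetCard α (univ : Finset (Fin d)), ∏ j ∈ A, s j with he
  have hNall' : Nall = #(withFiberCards (Fin D) s) := by
    rw [hNall]
    congr 1
    ext g
    simp only [mem_filter, mem_univ, true_and, mem_withFiberCards]
  have hNinj' :
      Ninj = #{g ∈ withFiberCards (Fin D) s | Injective (g ∘ ((↑) : T → Fin D))} := by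
    rw [hNinj]
    congr 1
    ext g
    simp only [mem_filter, mem_univ, true_and, mem_withFiberCards]
    exact and_congr_right fun _ => Set.injOn_iff_injective
  have hcount : Nall * (α ! * e) = D.descFactorial α * Ninj := by
    simpa [hNall', hNinj', hT] using
      card_withFiberCards_mul_eq (s := s) (Subtype.val_injective (p := (· ∈ T)))
  refine ⟨?_, ?_⟩
  · rw [← Nat.factorial_mul_descFactorial hαD]
    calc Ninj * ((D - α)! * D.descFactorial α)
        = (D - α)! * (D.descFactorial α * Ninj) := by ring
      _ = (D - α)! * (Nall * (α ! * e)) := by rw [hcount]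
      _ = α ! * (D - α)! * e * Nall := by ring
  · have hNall_ne : (Nall : ℚ) ≠ 0 := by
      rw [hNall']
      exact_mod_cast (withFiberCards_nonempty (by simpa using hs)).card_pos.ne'
    have hdesc_ne : (D.descFactorial α : ℚ) ≠ 0 := by
      exact_mod_cast (Nat.descFactorial_pos.2 hαD).ne'
    rw [← Nat.cast_descFactorial_eq_prod_range_sub hαD, div_eq_div_iff hNall_ne hdesc_ne]
    have hcountQ := congrArg (Nat.cast : ℕ → ℚ) hcount
    push_cast [he] at hcountQ
    linear_combination -hcountQ

/-- Let `N_all` count the assignments `g : Fin D → Fin d` with prescribed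
fiber sizes `s j` and `N_inj` those that are additionally injective on the
fixed `α`-element set `T` of adversary-known addresses.  Then
`N_inj · D! = α! · (D−α)! · (∑_{|A| = α} ∏_{j ∈ A} s j) · N_all`;
equivalently, the probability that a uniformly random such assignment sends
the `α` elements of `T` to pairwise distinct groups equals
`α! · (∑_{|A|=α} ∏_{j∈A} s j) / (D(D−1)⋯(D−α+1))`. -/
theorem real_view_candidate_probability (D d α : ℕ) (hD : 0 < D) (hd : 0 < d)
    (hα : 0 < α) (hαD : α ≤ D) (s : Fin d → ℕ) (hs : ∑ j, s j = D)
    (T : Finset (Fin D)) (hT : T.card = α) (Ninj Nall : ℕ)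
    (hNinj : Ninj =
      (Finset.univ.filter
        (fun g : Fin D → Fin d =>
          (∀ j, (Finset.univ.filter (fun i => g i = j)).card = s j) ∧
            ∀ x ∈ T, ∀ y ∈ T, g x = g y → x = y)).card)
    (hNall : Nall =
      (Finset.univ.filter
        (fun g : Fin D → Fin d =>
          ∀ j, (Finset.univ.filter (fun i => g i = j)).card = s j)).card) :
    Ninj * D.factorial =
        α.factorial * (D - α).factorial *
          (∑ A ∈ Finset.powersetCard α (Finset.univ : Finset (Fin d)),
            ∏ j ∈ A, s j) * Nall ∧
      (Ninj : ℚ) / Nall =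
        (α.factorial *
            ∑ A ∈ Finset.powersetCard α (Finset.univ : Finset (Fin d)),
              ∏ j ∈ A, (s j : ℚ)) /
          ∏ i ∈ Finset.range α, ((D : ℚ) - i) :=
  real_view_candidate_probability_general D d α hαD s hs T hT Ninj Nall hNinj hNall
end

section
/- (Maclaurin's inequality) Let b₁, ..., b_n be positive real numbers and for k = 1, ..., n let M_k = e_k(b) / C(n,k), where e_k(b) = ∑_{1 ≤ i₁ < ... < i_k ≤ n} b_{i₁}⋯b_{i_k} is the k-th elementary symmetric polynomial and C(n,k) the binomial coefficient. Then M₁ ≥ M₂^{1/2} ≥ M₃^{1/3} ≥ ... ≥ M_n^{1/n}; i.e., for all 1 ≤ k ≤ l ≤ n, M_k^{1/k} ≥ M_l^{1/l}. -/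
/-!
With `M_0 = 1`, Newton's inequalities `M_k M_{k+2} ≤ M_{k+1}²` make the positive sequence `M`
log-concave, which gives `M_{k+1}^k ≤ M_k^{k+1}`, i.e. `M_{k+1}^{1/(k+1)} ≤ M_k^{1/k}`.

Newton's inequalities follow from two reductions. By Rolle's theorem, the derivative of
`∏ (X + b_i)` is `n ∏ (X + c_j)` for `n - 1` positive reals `c_j` whose means `M_k`, `k < n`, are
those of `b`; this lowers `n` down to `k + 2`. Replacing each `b_i` by `b_i⁻¹` turns `M_j` into
`M_{n-j} / ∏ b_i`, which moves `k` down to `0`; a second descent to `n = 2` leaves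
`b₁ b₂ ≤ ((b₁ + b₂) / 2)²`.
-/

open Polynomial

theorem Polynomial.Splits.derivative {p : ℝ[X]} (hp : p.Splits) : p.derivative.Splits := by
  rw [splits_iff_card_roots] at hp ⊢
  refine le_antisymm (card_roots' _) ?_
  have := p.card_roots_le_derivative
  rw [natDegree_derivative]
  omega

namespace Multiset

variable {R : Type*}

@[simp]
lemma esymm_zero [CommSemiring R] (s : Multiset R) : s.esymm 0 = 1 := by
  simp [esymm]

lemma esymm_eq_zero_of_card_lt [CommSemiring R] {s : Multiset R} {k : ℕ} (h : card s < k) :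
    s.esymm k = 0 := by
  simp [esymm, powersetCard_eq_empty k h]

lemma esymm_cons_succ [CommSemiring R] (a : R) (s : Multiset R) (k : ℕ) :
    (a ::ₘ s).esymm (k + 1) = s.esymm (k + 1) + a * s.esymm k := by
  simp [esymm, powersetCard_cons, map_map, sum_map_mul_left]

lemma esymm_pos [CommSemiring R] [PartialOrder R] [IsStrictOrderedRing R] {s : Multiset R}
    (hs : ∀ a ∈ s, 0 < a) {k : ℕ} (hk : k ≤ card s) : 0 < s.esymm k := by
  have hne : powersetCard k s ≠ 0 := by
    simpa [← card_pos, card_powersetCard] using Nat.choose_pos hk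
  simpa [esymm] using sum_lt_sum_of_nonempty hne (f := 0) (g := prod) fun t ht =>
    prod_pos fun a ha => hs a (mem_of_le (mem_powersetCard.1 ht).1 ha)

lemma esymm_map_inv_mul_prod [Semifield R] {s : Multiset R} (hs : ∀ a ∈ s, a ≠ 0) {i j : ℕ}
    (hij : i + j = card s) : (s.map (·⁻¹)).esymm i * s.prod = s.esymm j := by
  induction s using Multiset.induction_on generalizing i j with
  | empty => simp_all
  | cons a s ih =>
    have ha : a ≠ 0 := hs a (mem_cons_self a s)
    replace ih {i j : ℕ} (h : i + j = card s) : (s.map (·⁻¹)).esymm i * s.prod = s.esymm j :=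
      ih (fun b hb => hs b (mem_cons_of_mem hb)) h
    rw [card_cons] at hij
    rcases i with _ | i <;> rcases j with _ | j
    · simp at hij
    · have h := ih (i := 0) (j := j) (by omega)
      rw [esymm_cons_succ, esymm_eq_zero_of_card_lt (s := s) (by omega), ← h, prod_cons]
      simp
    · have h := ih (i := i) (j := 0) (by omega)
      rw [map_cons, esymm_cons_succ, esymm_eq_zero_of_card_lt (by simp; omega), prod_cons]
      field_simp
      simpa using h
    · have h₁ := ih (i := i + 1) (j := j) (by omega)
      have h₂ := ih (i := i) (j := j + 1) (by omega)
      rw [map_cons, esymm_cons_succ, esymm_cons_succ, prod_cons, ← h₁, ← h₂]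
      field_simp
      ring

lemma prod_X_add_C_eq_prod_X_sub_C_neg [CommRing R] (s : Multiset R) :
    (s.map (X + C ·)).prod = ((s.map Neg.neg).map (X - C ·)).prod := by
  simp [map_map, sub_eq_add_neg]

lemma eval_derivative_prod_X_add_C_pos {s : Multiset ℝ} (hs : ∀ a ∈ s, 0 < a)
    (hne : s ≠ 0) {x : ℝ} (hx : 0 ≤ x) : 0 < (derivative (s.map (X + C ·)).prod).eval x := by
  classical
  have hterm : ∀ a ∈ s, 0 < ((s.erase a).map (fun b => x + b)).prod := fun a _ =>
    prod_pos fun y hy => by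
      obtain ⟨b, hb, rfl⟩ := mem_map.1 hy
      linarith [hs b (mem_of_mem_erase hb)]
  simpa [derivative_prod, eval_multisetSum, eval_multiset_prod, map_map] using
    sum_lt_sum_of_nonempty hne hterm

lemma exists_derivative_prod_X_add_C_eq {s : Multiset ℝ} {n : ℕ}
    (hs : ∀ a ∈ s, 0 < a) (hn : card s = n + 1) :
    ∃ t : Multiset ℝ, card t = n ∧ (∀ a ∈ t, 0 < a) ∧
      derivative (s.map (X + C ·)).prod = C ((n : ℝ) + 1) * (t.map (X + C ·)).prod := by
  have hp : (s.map (X + C ·)).prod.Splits := Splits.multisetProd (by simp [Splits.X_add_C])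
  set p := (s.map (X + C ·)).prod
  have hdeg : p.natDegree = n + 1 := by
    simp [p, prod_X_add_C_eq_prod_X_sub_C_neg, hn]
  have hlead : (derivative p).leadingCoeff = n + 1 := by
    rw [leadingCoeff, natDegree_derivative, hdeg, coeff_derivative, Nat.add_sub_cancel,
      show p.coeff (n + 1) = 1 by simpa [hn, esymm] using s.prod_X_add_C_coeff hn.ge]
    ring
  refine ⟨(derivative p).roots.map Neg.neg, ?_, ?_, ?_⟩
  · rw [card_map, hp.derivative.natDegree_eq_card_roots.symm, natDegree_derivative, hdeg]
    rfl
  · intro a ha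
    obtain ⟨r, hr, rfl⟩ := mem_map.1 ha
    by_contra! hr0
    have := eval_derivative_prod_X_add_C_pos hs (by rintro rfl; simp at hn) (neg_nonpos.1 hr0)
    exact this.ne' (isRoot_of_mem_roots hr)
  · conv_lhs => rw [hp.derivative.eq_prod_roots, hlead]
    simp [map_map, sub_eq_add_neg]

noncomputable def esymmMean [Semifield R] (s : Multiset R) (k : ℕ) : R :=
  s.esymm k / (card s).choose k

@[simp]
lemma esymmMean_zero [Semifield R] (s : Multiset R) : s.esymmMean 0 = 1 := by
  simp [esymmMean]

lemma esymmMean_pos [Semifield R] [LinearOrder R] [IsStrictOrderedRing R] {s : Multiset R}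
    (hs : ∀ a ∈ s, 0 < a) {k : ℕ} (hk : k ≤ card s) : 0 < s.esymmMean k :=
  div_pos (esymm_pos hs hk) (by exact_mod_cast Nat.choose_pos hk)

lemma esymmMean_map_inv_mul_prod [Semifield R] {s : Multiset R} (hs : ∀ a ∈ s, a ≠ 0)
    {i j : ℕ} (hij : i + j = card s) :
    (s.map (·⁻¹)).esymmMean i * s.prod = s.esymmMean j := by
  rw [esymmMean, esymmMean, card_map, div_mul_eq_mul_div, esymm_map_inv_mul_prod hs hij,
    Nat.choose_symm_of_eq_add hij.symm]

lemma exists_card_eq_esymmMean_eq {s : Multiset ℝ} {n : ℕ} (hs : ∀ a ∈ s, 0 < a)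
    (hn : card s = n + 1) :
    ∃ t : Multiset ℝ, card t = n ∧ (∀ a ∈ t, 0 < a) ∧ ∀ k ≤ n, t.esymmMean k = s.esymmMean k := by
  obtain ⟨t, ht, htpos, hderiv⟩ := exists_derivative_prod_X_add_C_eq hs hn
  refine ⟨t, ht, htpos, fun k hk => ?_⟩
  have hcoeff := congr_arg (coeff · (n - k)) hderiv
  simp only [coeff_derivative, coeff_C_mul, prod_X_add_C_coeff _ (show n - k + 1 ≤ card s by omega),
    prod_X_add_C_coeff _ (show n - k ≤ card t by omega), hn, ht] at hcoeff
  rw [show n + 1 - (n - k + 1) = k by omega, show n - (n - k) = k by omega] at hcoeff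
  have hchoose : (n.choose k : ℝ) * (n + 1) = (n + 1).choose k * ((n - k : ℕ) + 1) := by
    exact_mod_cast (Nat.choose_mul_succ_eq n k).trans (by rw [show n + 1 - k = n - k + 1 by omega])
  have h₁ : (0 : ℝ) < n.choose k := by exact_mod_cast Nat.choose_pos hk
  have h₂ : (0 : ℝ) < (n + 1).choose k := by exact_mod_cast Nat.choose_pos (by omega)
  rw [esymmMean, esymmMean, ht, hn, div_eq_div_iff h₁.ne' h₂.ne']
  refine mul_right_cancel₀ (show (n : ℝ) + 1 ≠ 0 by positivity) ?_
  linear_combination -s.esymm k * hchoose - ((n + 1).choose k : ℝ) * hcoeff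

lemma esymmMean_mul_le_sq_of_card_eq_two {s : Multiset ℝ} (hs : card s = 2) :
    s.esymmMean 0 * s.esymmMean 2 ≤ s.esymmMean 1 ^ 2 := by
  obtain ⟨x, y, rfl⟩ := card_eq_two.1 hs
  simp only [insert_eq_cons, esymmMean, esymm_zero, esymm_pair_one, esymm_pair_two]
  norm_num
  nlinarith [sq_nonneg (x - y)]

lemma esymmMean_mul_le_sq_of_forall_card_eq {k : ℕ}
    (h : ∀ t : Multiset ℝ, (∀ a ∈ t, 0 < a) → card t = k + 2 →
      t.esymmMean k * t.esymmMean (k + 2) ≤ t.esymmMean (k + 1) ^ 2)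
    {s : Multiset ℝ} (hs : ∀ a ∈ s, 0 < a) (hk : k + 2 ≤ card s) :
    s.esymmMean k * s.esymmMean (k + 2) ≤ s.esymmMean (k + 1) ^ 2 := by
  obtain ⟨n, hn⟩ : ∃ n, card s = n := ⟨_, rfl⟩
  induction n, (hn ▸ hk : k + 2 ≤ n) using Nat.le_induction generalizing s with
  | base => exact h s hs hn
  | succ n hkn ih =>
    obtain ⟨t, ht, htpos, hmean⟩ := exists_card_eq_esymmMean_eq hs hn
    rw [← hmean k (by omega), ← hmean (k + 1) (by omega), ← hmean (k + 2) hkn]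
    exact ih htpos (by omega) ht

lemma esymmMean_zero_mul_le_sq {s : Multiset ℝ} (hs : ∀ a ∈ s, 0 < a) (h2 : 2 ≤ card s) :
    s.esymmMean 0 * s.esymmMean 2 ≤ s.esymmMean 1 ^ 2 :=
  esymmMean_mul_le_sq_of_forall_card_eq (fun _ _ ht => esymmMean_mul_le_sq_of_card_eq_two ht) hs h2

lemma esymmMean_mul_le_sq_of_card_eq {s : Multiset ℝ} (hs : ∀ a ∈ s, 0 < a) {k : ℕ}
    (hk : card s = k + 2) : s.esymmMean k * s.esymmMean (k + 2) ≤ s.esymmMean (k + 1) ^ 2 := by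
  have hne : ∀ a ∈ s, a ≠ 0 := fun a ha => (hs a ha).ne'
  set u := s.map (·⁻¹)
  have hu : ∀ a ∈ u, 0 < a := forall_mem_map_iff.2 fun a ha => inv_pos.2 (hs a ha)
  have hNewton := esymmMean_zero_mul_le_sq hu (by simp [u, hk])
  rw [← esymmMean_map_inv_mul_prod hne (i := 2) (j := k) (by omega),
    ← esymmMean_map_inv_mul_prod hne (i := 1) (j := k + 1) (by omega),
    ← esymmMean_map_inv_mul_prod hne (i := 0) (j := k + 2) (by omega)]
  calc _ = (u.esymmMean 0 * u.esymmMean 2) * s.prod ^ 2 := by ring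
    _ ≤ u.esymmMean 1 ^ 2 * s.prod ^ 2 := by gcongr
    _ = _ := by ring

theorem esymmMean_mul_le_sq {s : Multiset ℝ} (hs : ∀ a ∈ s, 0 < a) {k : ℕ}
    (hk : k + 2 ≤ card s) : s.esymmMean k * s.esymmMean (k + 2) ≤ s.esymmMean (k + 1) ^ 2 :=
  esymmMean_mul_le_sq_of_forall_card_eq (fun _ ht htk => esymmMean_mul_le_sq_of_card_eq ht htk)
    hs hk

end Multiset

lemma pow_succ_le_pow_of_mul_le_sq {a : ℕ → ℝ} {n : ℕ} (h0 : a 0 = 1)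
    (hpos : ∀ k ≤ n, 0 < a k) (hlc : ∀ k, k + 2 ≤ n → a k * a (k + 2) ≤ a (k + 1) ^ 2)
    {k : ℕ} (hk : k + 1 ≤ n) : a (k + 1) ^ k ≤ a k ^ (k + 1) := by
  induction k with
  | zero => simp [h0]
  | succ k ih =>
    have hx := hpos k (by omega)
    have hy := hpos (k + 1) (by omega)
    have hz := hpos (k + 2) hk
    refine le_of_mul_le_mul_right ?_ (pow_pos hy k)
    calc a (k + 2) ^ (k + 1) * a (k + 1) ^ k ≤ a (k + 2) ^ (k + 1) * a k ^ (k + 1) := by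
          gcongr; exact ih (by omega)
      _ = (a k * a (k + 2)) ^ (k + 1) := by ring
      _ ≤ (a (k + 1) ^ 2) ^ (k + 1) := by gcongr; exact hlc k hk
      _ = a (k + 1) ^ (k + 1 + 1) * a (k + 1) ^ k := by ring

lemma rpow_one_div_succ_le_of_pow_le {x y : ℝ} (hx : 0 ≤ x) (hy : 0 ≤ y) {k : ℕ} (hk : k ≠ 0)
    (h : y ^ k ≤ x ^ (k + 1)) : y ^ ((1 : ℝ) / (k + 1 : ℕ)) ≤ x ^ ((1 : ℝ) / k) := by
  rw [one_div, one_div, ← pow_le_pow_iff_left₀ (by positivity) (by positivity)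
    (mul_ne_zero hk k.succ_ne_zero)]
  calc (y ^ ((k + 1 : ℕ) : ℝ)⁻¹) ^ (k * (k + 1)) = y ^ k := by
        rw [mul_comm, pow_mul, Real.rpow_inv_natCast_pow hy k.succ_ne_zero]
    _ ≤ x ^ (k + 1) := h
    _ = (x ^ (k : ℝ)⁻¹) ^ (k * (k + 1)) := by
        rw [pow_mul, Real.rpow_inv_natCast_pow hx hk]

theorem rpow_one_div_le_of_mul_le_sq {a : ℕ → ℝ} {n : ℕ} (h0 : a 0 = 1)
    (hpos : ∀ k ≤ n, 0 < a k) (hlc : ∀ k, k + 2 ≤ n → a k * a (k + 2) ≤ a (k + 1) ^ 2)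
    {k l : ℕ} (hk : 1 ≤ k) (hkl : k ≤ l) (hln : l ≤ n) :
    a l ^ ((1 : ℝ) / l) ≤ a k ^ ((1 : ℝ) / k) := by
  induction l, hkl using Nat.le_induction with
  | base => rfl
  | succ l hkl ih =>
    refine (rpow_one_div_succ_le_of_pow_le (hpos l (by omega)).le (hpos (l + 1) hln).le
      (by omega) (pow_succ_le_pow_of_mul_le_sq h0 hpos hlc hln)).trans (ih (by omega))

/-- Maclaurin's inequality: for positive reals `b₁, …, b_n` and the averages
`M k = e_k(b) / C(n,k)` (k-th elementary symmetric polynomial divided by the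
binomial coefficient), the chain `M₁ ≥ M₂^{1/2} ≥ ⋯ ≥ M_n^{1/n}` holds; i.e.,
for all `1 ≤ k ≤ l ≤ n`, `M_l^{1/l} ≤ M_k^{1/k}` (real powers). -/
theorem maclaurin_inequality (n : ℕ) (b : Fin n → ℝ) (hb : ∀ i, 0 < b i)
    (M : ℕ → ℝ)
    (hM : ∀ k, M k =
      (∑ A ∈ Finset.powersetCard k (Finset.univ : Finset (Fin n)),
          ∏ i ∈ A, b i) / (n.choose k))
    (k l : ℕ) (hk : 1 ≤ k) (hkl : k ≤ l) (hln : l ≤ n) :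
    M l ^ ((1 : ℝ) / l) ≤ M k ^ ((1 : ℝ) / k) := by
  set s : Multiset ℝ := Finset.univ.val.map b
  have hs : ∀ a ∈ s, 0 < a := Multiset.forall_mem_map_iff.2 fun i _ => hb i
  have hcard : Multiset.card s = n := by simp [s]
  obtain rfl : M = s.esymmMean := funext fun k => by
    rw [hM, Multiset.esymmMean, Finset.esymm_map_val, hcard]
  exact rpow_one_div_le_of_mul_le_sq s.esymmMean_zero
    (fun k hk => s.esymmMean_pos hs (hcard ▸ hk))
    (fun k hk => Multiset.esymmMean_mul_le_sq hs (hcard ▸ hk)) hk hkl hln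
end
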